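/- (Euclidean distance estimation is unbiased) Fix reals L < U, t > 0 and ε > 0, and set μ = U − L + 2t. Let x_1, x_2 ∈ [L, U] with d_E = |x_1 − x_2| ≤ 2t, let d_H be the Hamming distance between the DPBV encodings of x_1 and x_2, and define the estimator d̂_E = (μ/(2s)) · ((e^ε + 1)/(e^ε − 1))^2 · d_H − μ e^ε/(e^ε − 1)^2. Then E[d̂_E] = d_E. -/

import Mathlib

open MeasureTheory ProbabilityTheory Real

/-- The BV hash: `h_{r,t}(x) = 1` if `x ∈ [r - t, r + t]` and `0` otherwise. -/
noncomputable def bvHash (t r x : ℝ) : ℕ := if x ∈ Set.Icc (r - t) (r + t) then 1 else 0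

/-- The uniform probability measure on the interval `[a, b]`. -/
noncomputable def uniformIcc (a b : ℝ) : Measure ℝ :=
  (ENNReal.ofReal (b - a))⁻¹ • (volume.restrict (Set.Icc a b))

/-- A DPBV bit: the BV hash bit `bvHash t r x` XOR-ed with the flip indicator `flip ∈ {0,1}`. -/
noncomputable def dpbvBit (t r x flip : ℝ) : ℕ :=
  if flip = 1 then 1 - bvHash t r x else bvHash t r x

/-- The (random) Hamming distance between the DPBV encodings of `x₁` (with flips `f`) and `x₂`
(with flips `g`): the number of coordinates in which they differ. -/
noncomputable def dpbvHammingDist (t : ℝ) {s : ℕ} {Ω : Type*}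
    (r f g : Fin s → Ω → ℝ) (x₁ x₂ : ℝ) (ω : Ω) : ℕ :=
  (Finset.univ.filter fun i =>
    dpbvBit t (r i ω) x₁ (f i ω) ≠ dpbvBit t (r i ω) x₂ (g i ω)).card

/-- The (random) DPBV Euclidean distance estimator
`d̂_E = (μ/(2s)) · ((e^ε + 1)/(e^ε − 1))² · d_H − μ·e^ε/(e^ε − 1)²`. -/
noncomputable def dpbvEstimator (t μ ε : ℝ) {s : ℕ} {Ω : Type*}
    (r f g : Fin s → Ω → ℝ) (x₁ x₂ : ℝ) (ω : Ω) : ℝ :=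
  μ / (2 * s) * ((exp ε + 1) / (exp ε - 1)) ^ 2 * (dpbvHammingDist t r f g x₁ x₂ ω : ℝ)
    - μ * exp ε / (exp ε - 1) ^ 2

/-!
For each coordinate, the hash bits of `x₁` and `x₂` differ exactly when `r_i` falls in the
symmetric difference of the windows `[x_j - t, x_j + t]`. Since `|x₁ - x₂| ≤ 2t` this set has
length `2 d_E` and lies inside `[L - t, U + t]`, so it is hit with probability `p = 2 d_E / μ`.
The DPBV bits differ iff (the hash bits differ ↔ the flips agree), and with `a = 1/(e^ε + 1)` the
flips agree with probability `q = a² + (1 - a)²`. Independence gives the per-coordinate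
probability `p q + (1 - p)(1 - q) = (1 - q) + p (2q - 1)`, and since
`1 - q = 2e^ε/(e^ε + 1)²` and `2q - 1 = ((e^ε - 1)/(e^ε + 1))²`, the affine estimator turns
`E[d_H] = s (p q + (1 - p)(1 - q))` back into `μ p / 2 = d_E`.
-/

lemma bvHash_eq_ite_mem (t r x : ℝ) :
    bvHash t r x = if r ∈ Set.Icc (x - t) (x + t) then 1 else 0 := by
  simp only [bvHash, ← Set.mem_Icc_iff_abs_le, abs_sub_comm x r]

lemma bvHash_ne_bvHash_iff (t r x₁ x₂ : ℝ) :
    bvHash t r x₁ ≠ bvHash t r x₂ ↔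
      r ∈ symmDiff (Set.Icc (x₁ - t) (x₁ + t)) (Set.Icc (x₂ - t) (x₂ + t)) := by
  rw [bvHash_eq_ite_mem, bvHash_eq_ite_mem, Set.mem_symmDiff]
  split_ifs <;> simp_all

lemma bvHash_le_one (t r x : ℝ) : bvHash t r x ≤ 1 := by
  unfold bvHash
  split_ifs <;> simp

lemma dpbvBit_ne_dpbvBit_iff {t r x₁ x₂ F G : ℝ} (hF : F = 0 ∨ F = 1) (hG : G = 0 ∨ G = 1) :
    dpbvBit t r x₁ F ≠ dpbvBit t r x₂ G ↔ (bvHash t r x₁ ≠ bvHash t r x₂ ↔ F = G) := by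
  have h₁ := bvHash_le_one t r x₁
  have h₂ := bvHash_le_one t r x₂
  rcases hF with rfl | rfl <;> rcases hG with rfl | rfl <;> simp [dpbvBit] <;> omega

lemma setOf_dpbvBit_ne_eq {Ω : Type*} {R F G : Ω → ℝ} (t x₁ x₂ : ℝ)
    (hF01 : ∀ ω, F ω = 0 ∨ F ω = 1) (hG01 : ∀ ω, G ω = 0 ∨ G ω = 1) :
    {ω | dpbvBit t (R ω) x₁ (F ω) ≠ dpbvBit t (R ω) x₂ (G ω)} =
      {ω | R ω ∈ symmDiff (Set.Icc (x₁ - t) (x₁ + t)) (Set.Icc (x₂ - t) (x₂ + t)) ↔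
        (F ω, G ω) ∈ Set.diagonal ℝ} := by
  ext ω
  simp only [Set.mem_ofPred_eq, dpbvBit_ne_dpbvBit_iff (hF01 ω) (hG01 ω), bvHash_ne_bvHash_iff,
    Set.mem_diagonal_iff]

lemma volume_real_symmDiff_Icc_sub_add {a b t : ℝ} (h : |a - b| ≤ 2 * t) :
    volume.real (symmDiff (Set.Icc (a - t) (a + t)) (Set.Icc (b - t) (b + t)))
      = 2 * |a - b| := by
  wlog hab : a ≤ b generalizing a b
  · rw [symmDiff_comm, abs_sub_comm]
    exact this (by rwa [abs_sub_comm]) (le_of_not_ge hab)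
  rw [abs_sub_comm, abs_of_nonneg (sub_nonneg.mpr hab)] at h ⊢
  have hunion :
      Set.Icc (a - t) (a + t) ∪ Set.Icc (b - t) (b + t) = Set.Icc (a - t) (b + t) := by
    rw [Set.Icc_union_Icc' (by linarith) (by linarith), min_eq_left (by linarith),
      max_eq_right (by linarith)]
  have hinter :
      Set.Icc (a - t) (a + t) ∩ Set.Icc (b - t) (b + t) = Set.Icc (b - t) (a + t) := by
    rw [Set.Icc_inter_Icc, sup_eq_right.mpr (by linarith), inf_eq_left.mpr (by linarith)]
  simp only [symmDiff_eq_sup_sdiff_inf, Set.sup_eq_union, Set.inf_eq_inter, hunion, hinter]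
  rw [measureReal_sdiff (Set.Icc_subset_Icc (by linarith) (by linarith)) measurableSet_Icc
      measure_Icc_lt_top.ne,
    Real.volume_real_Icc_of_le (by linarith), Real.volume_real_Icc_of_le (by linarith)]
  ring

section Probability

variable {Ω : Type*} [MeasurableSpace Ω] {P : Measure Ω}

lemma measureReal_preimage_of_map_eq_uniformIcc {X : Ω → ℝ} {a b : ℝ} {S : Set ℝ}
    (hX : Measurable X) (hlaw : P.map X = uniformIcc a b) (hab : a ≤ b) (hS : MeasurableSet S)
    (hSab : S ⊆ Set.Icc a b) :
    P.real (X ⁻¹' S) = volume.real S / (b - a) := by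
  rw [measureReal_def, ← Measure.map_apply hX hS, hlaw, uniformIcc, Measure.smul_apply,
    Measure.restrict_apply hS, Set.inter_eq_left.mpr hSab, smul_eq_mul, ENNReal.toReal_mul,
    ENNReal.toReal_inv, ENNReal.toReal_ofReal (sub_nonneg.mpr hab), measureReal_def,
    div_eq_inv_mul]

lemma measureReal_bvHash_ne {X : Ω → ℝ} {L U t x₁ x₂ : ℝ} (hX : Measurable X)
    (hlaw : P.map X = uniformIcc (L - t) (U + t)) (hx₁ : x₁ ∈ Set.Icc L U)
    (hx₂ : x₂ ∈ Set.Icc L U) (hd : |x₁ - x₂| ≤ 2 * t) :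
    P.real {ω | bvHash t (X ω) x₁ ≠ bvHash t (X ω) x₂}
      = 2 * |x₁ - x₂| / (U - L + 2 * t) := by
  have ht : 0 ≤ t := by linarith [abs_nonneg (x₁ - x₂)]
  have hsub : ∀ x ∈ Set.Icc L U, Set.Icc (x - t) (x + t) ⊆ Set.Icc (L - t) (U + t) :=
    fun x hx => Set.Icc_subset_Icc (by linarith [hx.1]) (by linarith [hx.2])
  simp_rw [bvHash_ne_bvHash_iff]
  change P.real (X ⁻¹' symmDiff _ _) = _
  rw [measureReal_preimage_of_map_eq_uniformIcc hX hlaw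
      (by linarith [hx₁.1, hx₁.2]) (measurableSet_Icc.symmDiff measurableSet_Icc)
      (symmDiff_le_sup.trans (Set.union_subset (hsub x₁ hx₁) (hsub x₂ hx₂))),
    volume_real_symmDiff_Icc_sub_add hd]
  ring

lemma ProbabilityTheory.IndepFun.measureReal_preimage_iff_preimage
    [IsProbabilityMeasure P] {α β : Type*} [MeasurableSpace α] [MeasurableSpace β]
    {X : Ω → α} {Y : Ω → β} {s : Set α} {t : Set β} (hXY : IndepFun X Y P)
    (hX : Measurable X) (hY : Measurable Y) (hs : MeasurableSet s) (ht : MeasurableSet t) :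
    P.real {ω | X ω ∈ s ↔ Y ω ∈ t} =
      P.real (X ⁻¹' s) * P.real (Y ⁻¹' t)
        + (1 - P.real (X ⁻¹' s)) * (1 - P.real (Y ⁻¹' t)) := by
  have hmul : ∀ {s' : Set α} {t' : Set β}, MeasurableSet s' → MeasurableSet t' →
      P.real (X ⁻¹' s' ∩ Y ⁻¹' t') = P.real (X ⁻¹' s') * P.real (Y ⁻¹' t') :=
    fun hs' ht' => by
      simp only [measureReal_def, hXY.measure_inter_preimage_eq_mul _ _ hs' ht',
        ENNReal.toReal_mul]
  have hsplit :
      {ω | X ω ∈ s ↔ Y ω ∈ t} = (X ⁻¹' s ∩ Y ⁻¹' t) ∪ (X ⁻¹' sᶜ ∩ Y ⁻¹' tᶜ) := by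
    ext ω
    simp only [Set.mem_ofPred_eq, Set.mem_union, Set.mem_inter_iff, Set.mem_preimage,
      Set.mem_compl_iff]
    tauto
  rw [hsplit, measureReal_union (Set.disjoint_left.mpr fun _ h h' => h'.1 h.1)
      ((hX hs.compl).inter (hY ht.compl)), hmul hs ht, hmul hs.compl ht.compl,
    Set.preimage_compl, Set.preimage_compl, probReal_compl_eq_one_sub (hX hs),
    probReal_compl_eq_one_sub (hY ht)]

lemma measureReal_eq_of_indepFun [IsProbabilityMeasure P] {F G : Ω → ℝ} (hFG : IndepFun F G P)
    (hF : Measurable F) (hG : Measurable G) (hF01 : ∀ ω, F ω = 0 ∨ F ω = 1)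
    (hG01 : ∀ ω, G ω = 0 ∨ G ω = 1) :
    P.real {ω | F ω = G ω} = P.real {ω | F ω = 1} * P.real {ω | G ω = 1}
      + (1 - P.real {ω | F ω = 1}) * (1 - P.real {ω | G ω = 1}) := by
  have hset : {ω | F ω = G ω} = {ω | F ω ∈ ({1} : Set ℝ) ↔ G ω ∈ ({1} : Set ℝ)} := by
    ext ω
    rcases hF01 ω with h | h <;> rcases hG01 ω with h' | h' <;> simp [h, h']
  rw [hset]
  exact hFG.measureReal_preimage_iff_preimage hF hG (measurableSet_singleton 1)
    (measurableSet_singleton 1)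

lemma measurableSet_dpbvBit_ne {R F G : Ω → ℝ} (t x₁ x₂ : ℝ) (hR : Measurable R)
    (hF : Measurable F) (hG : Measurable G) (hF01 : ∀ ω, F ω = 0 ∨ F ω = 1)
    (hG01 : ∀ ω, G ω = 0 ∨ G ω = 1) :
    MeasurableSet {ω | dpbvBit t (R ω) x₁ (F ω) ≠ dpbvBit t (R ω) x₂ (G ω)} := by
  rw [setOf_dpbvBit_ne_eq t x₁ x₂ hF01 hG01]
  exact measurableSet_setOfPred.mpr <|
    (measurableSet_setOfPred.mp (hR (measurableSet_Icc.symmDiff measurableSet_Icc))).iff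
      (measurableSet_setOfPred.mp (measurableSet_diagonal.preimage (hF.prodMk hG)))

lemma measureReal_dpbvBit_ne [IsProbabilityMeasure P] {R F G : Ω → ℝ} (t x₁ x₂ : ℝ)
    (hR : Measurable R) (hF : Measurable F) (hG : Measurable G) (hF01 : ∀ ω, F ω = 0 ∨ F ω = 1)
    (hG01 : ∀ ω, G ω = 0 ∨ G ω = 1) (hindep : IndepFun R (fun ω => (F ω, G ω)) P) :
    P.real {ω | dpbvBit t (R ω) x₁ (F ω) ≠ dpbvBit t (R ω) x₂ (G ω)} =
      P.real {ω | bvHash t (R ω) x₁ ≠ bvHash t (R ω) x₂} * P.real {ω | F ω = G ω}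
        + (1 - P.real {ω | bvHash t (R ω) x₁ ≠ bvHash t (R ω) x₂})
          * (1 - P.real {ω | F ω = G ω}) := by
  simp_rw [setOf_dpbvBit_ne_eq t x₁ x₂ hF01 hG01, bvHash_ne_bvHash_iff]
  exact hindep.measureReal_preimage_iff_preimage hR (hF.prodMk hG)
    (measurableSet_Icc.symmDiff measurableSet_Icc) measurableSet_diagonal

end Probability

lemma card_filter_eq_sum_indicator {Ω ι : Type*} [Fintype ι] {p : ι → Ω → Prop}
    [∀ i ω, Decidable (p i ω)] (ω : Ω) :
    ((Finset.univ.filter fun i => p i ω).card : ℝ) = ∑ i, {ω | p i ω}.indicator 1 ω := by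
  rw [Finset.card_filter, Nat.cast_sum]
  simp [Set.indicator_apply]

section Counting

variable {Ω ι : Type*} [MeasurableSpace Ω] {P : Measure Ω} [IsFiniteMeasure P] [Fintype ι]
  {p : ι → Ω → Prop} [∀ i ω, Decidable (p i ω)]

lemma integrable_card_filter (hp : ∀ i, MeasurableSet {ω | p i ω}) :
    Integrable (fun ω => ((Finset.univ.filter fun i => p i ω).card : ℝ)) P := by
  simp_rw [card_filter_eq_sum_indicator]
  exact integrable_finsetSum _ fun i _ => (integrable_const 1).indicator (hp i)

lemma integral_card_filter (hp : ∀ i, MeasurableSet {ω | p i ω}) :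
    ∫ ω, ((Finset.univ.filter fun i => p i ω).card : ℝ) ∂P = ∑ i, P.real {ω | p i ω} := by
  simp_rw [card_filter_eq_sum_indicator]
  rw [integral_finsetSum _ fun i _ => (integrable_const 1).indicator (hp i)]
  simp_rw [integral_indicator_one (hp _)]

end Counting

lemma dpbv_debias {E μ d : ℝ} {s : ℕ} (hE : 1 < E) (hs : s ≠ 0) (hμ : μ ≠ 0) :
    let a := 1 / (E + 1)
    let q := a ^ 2 + (1 - a) ^ 2
    μ / (2 * s) * ((E + 1) / (E - 1)) ^ 2 *
        (s * (2 * d / μ * q + (1 - 2 * d / μ) * (1 - q))) - μ * E / (E - 1) ^ 2 = d := by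
  intro a q
  have : (s : ℝ) ≠ 0 := Nat.cast_ne_zero.mpr hs
  have : E - 1 ≠ 0 := by linarith
  have : E + 1 ≠ 0 := by linarith
  simp only [a, q]
  field_simp
  ring

theorem dpbv_estimator_unbiased_general
    {Ω : Type*} [MeasurableSpace Ω] (P : Measure Ω) [IsProbabilityMeasure P]
    (L U t μ ε : ℝ) (ht : 0 < t) (hε : 0 < ε) (hμ : μ = U - L + 2 * t)
    (s : ℕ) (hs : 1 ≤ s) (r f g : Fin s → Ω → ℝ)
    (hr : ∀ i, Measurable (r i)) (hf : ∀ i, Measurable (f i)) (hg : ∀ i, Measurable (g i))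
    (hrlaw : ∀ i, Measure.map (r i) P = uniformIcc (L - t) (U + t))
    (hf01 : ∀ i ω, f i ω = 0 ∨ f i ω = 1) (hg01 : ∀ i ω, g i ω = 0 ∨ g i ω = 1)
    (hflaw : ∀ i, P {ω | f i ω = 1} = ENNReal.ofReal (1 / (exp ε + 1)))
    (hglaw : ∀ i, P {ω | g i ω = 1} = ENNReal.ofReal (1 / (exp ε + 1)))
    (hindep : iIndepFun (β := fun _ : Fin s ⊕ (Fin s ⊕ Fin s) => ℝ)
      (Sum.elim r (Sum.elim f g)) P)
    (x₁ x₂ : ℝ) (hx₁ : x₁ ∈ Set.Icc L U) (hx₂ : x₂ ∈ Set.Icc L U)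
    (hd : |x₁ - x₂| ≤ 2 * t) :
    ∫ ω, dpbvEstimator t μ ε r f g x₁ x₂ ω ∂P = |x₁ - x₂| := by
  have hμ0 : μ ≠ 0 := by rw [hμ]; linarith [hx₁.1.trans hx₁.2]
  have hrfg : ∀ i, IndepFun (r i) (fun ω => (f i ω, g i ω)) P := fun i =>
    (hindep.indepFun_prodMk (fun j => by rcases j with j | j | j; exacts [hr j, hf j, hg j])
      (.inr (.inl i)) (.inr (.inr i)) (.inl i) (by simp) (by simp)).symm
  have hfg : ∀ i, IndepFun (f i) (g i) P := fun i =>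
    hindep.indepFun (i := .inr (.inl i)) (j := .inr (.inr i)) (by simp)
  set a := 1 / (exp ε + 1)
  have hflip : ∀ i, P.real {ω | f i ω = g i ω} = a ^ 2 + (1 - a) ^ 2 := fun i => by
    rw [measureReal_eq_of_indepFun (hfg i) (hf i) (hg i) (hf01 i) (hg01 i), measureReal_def,
      measureReal_def, hflaw, hglaw, ENNReal.toReal_ofReal (by positivity)]
    ring
  have hbit : ∀ i,
      P.real {ω | dpbvBit t (r i ω) x₁ (f i ω) ≠ dpbvBit t (r i ω) x₂ (g i ω)} =
        2 * |x₁ - x₂| / μ * (a ^ 2 + (1 - a) ^ 2)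
          + (1 - 2 * |x₁ - x₂| / μ) * (1 - (a ^ 2 + (1 - a) ^ 2)) := fun i => by
    rw [measureReal_dpbvBit_ne t x₁ x₂ (hr i) (hf i) (hg i) (hf01 i) (hg01 i) (hrfg i),
      measureReal_bvHash_ne (hr i) (hrlaw i) hx₁ hx₂ hd, hflip i, ← hμ]
  have hbitm : ∀ i, MeasurableSet
      {ω | dpbvBit t (r i ω) x₁ (f i ω) ≠ dpbvBit t (r i ω) x₂ (g i ω)} :=
    fun i => measurableSet_dpbvBit_ne t x₁ x₂ (hr i) (hf i) (hg i) (hf01 i) (hg01 i)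
  unfold dpbvEstimator dpbvHammingDist
  rw [integral_sub ((integrable_card_filter hbitm).const_mul _) (integrable_const _),
    integral_const_mul, integral_card_filter hbitm, Finset.sum_congr rfl fun i _ => hbit i,
    Finset.sum_const, Finset.card_univ, Fintype.card_fin, nsmul_eq_mul, integral_const,
    probReal_univ, one_smul]
  exact dpbv_debias (one_lt_exp_iff.mpr hε) (by omega) hμ0

/-- (Euclidean distance estimation is unbiased) For `L < U`, `t > 0`, `ε > 0`,
`μ = U - L + 2t`, with `r 0, …, r (s-1)` i.i.d. uniform on `[L - t, U + t]`, flip indicators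
`f i, g i ∈ {0,1}` each equal to `1` with probability `1/(e^ε + 1)`, all mutually independent,
and `x₁, x₂ ∈ [L, U]` with `d_E = |x₁ - x₂| ≤ 2t`, the estimator
`d̂_E = (μ/(2s)) · ((e^ε + 1)/(e^ε − 1))² · d_H − μ·e^ε/(e^ε − 1)²` satisfies
`E[d̂_E] = d_E`. -/
theorem dpbv_estimator_unbiased
    {Ω : Type*} [MeasurableSpace Ω] (P : Measure Ω) [IsProbabilityMeasure P]
    (L U t μ ε : ℝ) (hLU : L < U) (ht : 0 < t) (hε : 0 < ε) (hμ : μ = U - L + 2 * t)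
    (s : ℕ) (hs : 1 ≤ s) (r f g : Fin s → Ω → ℝ)
    (hr : ∀ i, Measurable (r i)) (hf : ∀ i, Measurable (f i)) (hg : ∀ i, Measurable (g i))
    (hrlaw : ∀ i, Measure.map (r i) P = uniformIcc (L - t) (U + t))
    (hf01 : ∀ i ω, f i ω = 0 ∨ f i ω = 1) (hg01 : ∀ i ω, g i ω = 0 ∨ g i ω = 1)
    (hflaw : ∀ i, P {ω | f i ω = 1} = ENNReal.ofReal (1 / (exp ε + 1)))
    (hglaw : ∀ i, P {ω | g i ω = 1} = ENNReal.ofReal (1 / (exp ε + 1)))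
    (hindep : iIndepFun (β := fun _ : Fin s ⊕ (Fin s ⊕ Fin s) => ℝ)
      (Sum.elim r (Sum.elim f g)) P)
    (x₁ x₂ : ℝ) (hx₁ : x₁ ∈ Set.Icc L U) (hx₂ : x₂ ∈ Set.Icc L U)
    (hd : |x₁ - x₂| ≤ 2 * t) :
    ∫ ω, dpbvEstimator t μ ε r f g x₁ x₂ ω ∂P = |x₁ - x₂| :=
  dpbv_estimator_unbiased_general P L U t μ ε ht hε hμ s hs r f g hr hf hg hrlaw hf01 hg01 hflaw
    hglaw hindep x₁ x₂ hx₁ hx₂ hd
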